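/- Let R be a local ring (the non-units of R form an additive subgroup, equivalently R has a unique maximal right ideal) that satisfies the generating hypothesis. Then R is von Neumann regular. -/

import Mathlib

/-!
Write `K(x)` for the two-term complex `R --x·--> R` of right `R`-modules. If `xy = 0`,
multiplication by `x` in degree `0` is a ghost `K(y) ⟶ K(x)`; a null-homotopy of it yields `s`
with `x = xs` and `sy = 0`, and since `s` or `1 - s` is a unit, `x = 0` or `y = 0`. So `R` has
no zero divisors, and for `x ≠ 0` the identity in degree `1` is a ghost from `K(x)` to its shift
by one. A null-homotopy of that map gives `ax + xb = 1`, so `ax` or `xb` is a unit, and then so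
is `x` because local rings are Dedekind-finite. Thus `R` is a division ring.
-/

open CategoryTheory CategoryTheory.Limits HomologicalComplex TensorProduct

universe u

/-- A chain complex of right `R`-modules (i.e. left `Rᵐᵒᵖ`-modules) is perfect if it is
bounded and each term is a finitely generated projective module. -/
def IsPerfect (R : Type u) [Ring R] (P : ChainComplex (ModuleCat.{u} Rᵐᵒᵖ) ℤ) : Prop :=
  (∃ a b : ℤ, ∀ n : ℤ, (n < a ∨ b < n) → IsZero (P.X n)) ∧
    ∀ n : ℤ, Module.Finite Rᵐᵒᵖ (P.X n) ∧ Module.Projective Rᵐᵒᵖ (P.X n)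

/-- `R` satisfies the generating hypothesis: every chain map between perfect complexes of
right `R`-modules which induces the zero map on all homology modules is chain homotopic
to zero. -/
def SatisfiesGH (R : Type u) [Ring R] : Prop :=
  ∀ P Q : ChainComplex (ModuleCat.{u} Rᵐᵒᵖ) ℤ, IsPerfect R P → IsPerfect R Q →
    ∀ f : P ⟶ Q, (∀ n : ℤ, homologyMap f n = 0) → Nonempty (Homotopy f 0)


namespace IsLocalRing

variable {R : Type*} [Ring R] [IsLocalRing R]

theorem eq_zero_or_eq_one_of_isIdempotentElem {e : R} (he : IsIdempotentElem e) :
    e = 0 ∨ e = 1 := by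
  rcases isUnit_or_isUnit_of_add_one (add_sub_cancel e 1) with h | h
  · exact Or.inr ((IsIdempotentElem.iff_eq_one_of_isUnit h).mp he)
  · exact Or.inl (sub_eq_self.mp ((IsIdempotentElem.iff_eq_one_of_isUnit h).mp he.one_sub))

instance (priority := 100) : IsDedekindFiniteMonoid R where
  mul_eq_one_symm {a b} hab := by
    have hba : IsIdempotentElem (b * a) := by
      rw [IsIdempotentElem, mul_assoc, ← mul_assoc a, hab, one_mul]
    refine (eq_zero_or_eq_one_of_isIdempotentElem hba).resolve_left fun h => ?_
    refine one_ne_zero (α := R) ?_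
    calc (1 : R) = a * (b * a) * b := by rw [← mul_assoc, hab, one_mul, hab]
      _ = 0 := by rw [h, mul_zero, zero_mul]

end IsLocalRing

namespace HomologicalComplex

variable {C : Type*} [Category C] [HasZeroMorphisms C] {ι : Type*} {c : ComplexShape ι}
  {K L : HomologicalComplex C c}

lemma homologyMap_eq_zero_of_f_eq_comp_d (φ : K ⟶ L) {i j : ι} [K.HasHomology i]
    [L.HasHomology i] (ψ : K.X i ⟶ L.X j) (h : φ.f i = ψ ≫ L.d j i) :
    homologyMap φ i = 0 := by
  have hcycles : cyclesMap φ i = K.iCycles i ≫ ψ ≫ L.toCycles j i := by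
    rw [← cancel_mono (L.iCycles i)]
    simp [h]
  rw [← cancel_epi (K.homologyπ i), homologyπ_naturality, hcycles]
  simp

lemma homologyMap_eq_zero_of_f_eq_zero (φ : K ⟶ L) {i : ι} [K.HasHomology i]
    [L.HasHomology i] (h : φ.f i = 0) : homologyMap φ i = 0 :=
  homologyMap_eq_zero_of_f_eq_comp_d φ 0 (j := i) (by rw [h, zero_comp])

lemma isZero_homology_of_mono_d (K : HomologicalComplex C c) (i j : ι) [K.HasHomology i]
    [Mono (K.d i j)] : IsZero (K.homology i) :=
  (IsZero.of_mono_eq_zero (K.iCycles i) (by simp [← cancel_mono (K.d i j)])).of_epi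
    (K.homologyπ i)

end HomologicalComplex

open MulOpposite ComplexShape

section GhostMaps

variable {R : Type u} [Ring R]

variable (R) in
/-- Left multiplication by `x` on `R_R`, i.e. `a ↦ a * op x` on the `Rᵐᵒᵖ`-module `Rᵐᵒᵖ`. -/
noncomputable def leftMulEquiv : R ≃+* End (ModuleCat.of Rᵐᵒᵖ Rᵐᵒᵖ) :=
  ((RingEquiv.opOp R).trans (RingEquiv.moduleEndSelf Rᵐᵒᵖ)).trans
    (ModuleCat.endRingEquiv (ModuleCat.of Rᵐᵒᵖ Rᵐᵒᵖ)).symm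

lemma mono_leftMulEquiv {x : R} (hx : IsLeftRegular x) : Mono (leftMulEquiv R x) := by
  rw [ModuleCat.mono_iff_injective]
  intro a b hab
  exact unop_injective (hx (congrArg unop hab))

lemma isPerfect_double {X₀ X₁ : ModuleCat.{u} Rᵐᵒᵖ} [Module.Finite Rᵐᵒᵖ X₀]
    [Module.Projective Rᵐᵒᵖ X₀] [Module.Finite Rᵐᵒᵖ X₁] [Module.Projective Rᵐᵒᵖ X₁]
    (f : X₀ ⟶ X₁) {i j : ℤ} (hij : (down ℤ).Rel i j) : IsPerfect R (double f hij) := by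
  have hi : i = j + 1 := hij.symm
  refine ⟨⟨j, i, fun n hn => isZero_double_X f hij n (by omega) (by omega)⟩, fun n => ?_⟩
  by_cases hn₀ : n = i
  · subst hn₀
    let e := (doubleXIso₀ f hij).toLinearEquiv
    exact ⟨Module.Finite.equiv e.symm, Module.Projective.of_equiv e.symm⟩
  by_cases hn₁ : n = j
  · subst hn₁
    let e := (doubleXIso₁ f hij (by omega)).toLinearEquiv
    exact ⟨Module.Finite.equiv e.symm, Module.Projective.of_equiv e.symm⟩
  have := ModuleCat.subsingleton_of_isZero (isZero_double_X f hij n hn₀ hn₁)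
  exact ⟨inferInstance, inferInstance⟩

noncomputable def shiftGhost (x : R) :
    double (leftMulEquiv R x) (down_mk (1 : ℤ) 0 rfl) ⟶
      double (leftMulEquiv R x) (down_mk (2 : ℤ) 1 rfl) :=
  mkHomFromDouble _ (by omega) (doubleXIso₁ _ _ (by omega)).inv 0
    (by rw [double_d_eq_zero₀ _ _ _ _ (by omega), comp_zero, comp_zero]) (by simp)

lemma homologyMap_shiftGhost {x : R} (hx : IsLeftRegular x) (n : ℤ) :
    homologyMap (shiftGhost x) n = 0 := by
  by_cases h₁ : n = 1
  · subst h₁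
    have : Mono ((double (leftMulEquiv R x) (down_mk (1 : ℤ) 0 rfl)).d 1 0) := by
      have := mono_leftMulEquiv hx
      rw [double_d _ _ (by omega)]
      infer_instance
    exact (isZero_homology_of_mono_d _ 1 0).eq_of_src _ _
  apply homologyMap_eq_zero_of_f_eq_zero
  by_cases h₀ : n = 0
  · subst h₀
    exact (isZero_double_X _ _ 0 (by omega) (by omega)).eq_of_tgt _ _
  · exact (isZero_double_X _ _ n h₁ h₀).eq_of_src _ _

lemma exists_mul_add_mul_eq_one_of_homotopy (x : R) (h : Homotopy (shiftGhost x) 0) :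
    ∃ a b : R, a * x + x * b = 1 := by
  have hc := h.comm 1
  rw [dNext_eq _ (down_mk (1 : ℤ) 0 rfl), prevD_eq _ (down_mk (2 : ℤ) 1 rfl),
    double_d _ _ (by omega), double_d _ _ (by omega)] at hc
  simp only [shiftGhost, mkHomFromDouble_f₀, HomologicalComplex.zero_f, add_zero] at hc
  set a := (doubleXIso₁ _ _ (by omega)).inv ≫ h.hom 0 1 ≫ (doubleXIso₁ _ _ (by omega)).hom
  set b := (doubleXIso₀ _ _).inv ≫ h.hom 1 2 ≫ (doubleXIso₀ _ _).hom
  have key : 𝟙 _ = leftMulEquiv R x ≫ a + b ≫ leftMulEquiv R x := by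
    have := (doubleXIso₀ _ _).inv ≫= hc =≫ (doubleXIso₁ _ _ (by omega)).hom
    simpa [a, b, Preadditive.add_comp, Preadditive.comp_add] using this
  refine ⟨(leftMulEquiv R).symm a, (leftMulEquiv R).symm b, (leftMulEquiv R).injective ?_⟩
  simp [End.mul_def, key]

noncomputable def mulGhost {x y : R} (hxy : x * y = 0) :
    double (leftMulEquiv R y) (down_mk (1 : ℤ) 0 rfl) ⟶
      double (leftMulEquiv R x) (down_mk (1 : ℤ) 0 rfl) :=
  mkHomFromDouble _ (by omega) 0 (leftMulEquiv R x ≫ (doubleXIso₁ _ _ (by omega)).inv)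
    (by rw [zero_comp, ← Category.assoc, ← End.mul_def, ← map_mul, hxy, map_zero, zero_comp])
    (fun k _ => by rw [double_d_eq_zero₀ _ _ _ _ (by omega), comp_zero])

lemma homologyMap_mulGhost {x y : R} (hxy : x * y = 0) (n : ℤ) :
    homologyMap (mulGhost hxy) n = 0 := by
  by_cases h₀ : n = 0
  · subst h₀
    refine homologyMap_eq_zero_of_f_eq_comp_d _ ((doubleXIso₁ _ _ (by omega)).hom ≫
      (doubleXIso₀ _ _).inv) (j := 1) ?_
    simp [mulGhost, double_d _ _ (show (1 : ℤ) ≠ 0 by omega)]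
  apply homologyMap_eq_zero_of_f_eq_zero
  by_cases h₁ : n = 1
  · subst h₁
    simp [mulGhost]
  · exact (isZero_double_X _ _ n h₁ h₀).eq_of_src _ _

lemma exists_eq_mul_and_mul_eq_zero_of_homotopy {x y : R} (hxy : x * y = 0)
    (h : Homotopy (mulGhost hxy) 0) : ∃ s : R, x = x * s ∧ s * y = 0 := by
  have hc₀ := h.comm 0
  have hc₁ := h.comm 1
  rw [dNext_eq _ (down_mk (0 : ℤ) (-1) rfl), prevD_eq _ (down_mk (1 : ℤ) 0 rfl),
    double_d_eq_zero₀ _ _ _ _ (by omega), double_d _ _ (by omega)] at hc₀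
  rw [dNext_eq _ (down_mk (1 : ℤ) 0 rfl), prevD_eq _ (down_mk (2 : ℤ) 1 rfl),
    double_d_eq_zero₀ _ _ (2 : ℤ) _ (by omega), double_d _ _ (by omega)] at hc₁
  simp only [mulGhost, mkHomFromDouble_f₀, mkHomFromDouble_f₁, HomologicalComplex.zero_f,
    add_zero] at hc₀ hc₁
  set σ := (doubleXIso₁ _ _ (by omega)).inv ≫ h.hom 0 1 ≫ (doubleXIso₀ _ _).hom
  have hx : leftMulEquiv R x = σ ≫ leftMulEquiv R x := by
    have := (doubleXIso₁ _ _ (by omega)).inv ≫= hc₀ =≫ (doubleXIso₁ _ _ (by omega)).hom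
    simpa [σ] using this
  have hy : 0 = leftMulEquiv R y ≫ σ := by
    have := (doubleXIso₀ _ _).inv ≫= hc₁ =≫ (doubleXIso₀ _ _).hom
    simpa [σ] using this
  refine ⟨(leftMulEquiv R).symm σ, (leftMulEquiv R).injective ?_, (leftMulEquiv R).injective ?_⟩
  · simpa [End.mul_def] using hx
  · simpa [End.mul_def] using hy.symm

end GhostMaps

namespace SatisfiesGH

variable {R : Type u} [Ring R]

lemma exists_mul_add_mul_eq_one (hgh : SatisfiesGH R) {x : R} (hx : IsLeftRegular x) :
    ∃ a b : R, a * x + x * b = 1 :=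
  let ⟨h⟩ := hgh _ _ (isPerfect_double _ _) (isPerfect_double _ _) (shiftGhost x)
    (homologyMap_shiftGhost hx)
  exists_mul_add_mul_eq_one_of_homotopy x h

lemma exists_eq_mul_and_mul_eq_zero (hgh : SatisfiesGH R) {x y : R} (hxy : x * y = 0) :
    ∃ s : R, x = x * s ∧ s * y = 0 :=
  let ⟨h⟩ := hgh _ _ (isPerfect_double _ _) (isPerfect_double _ _) (mulGhost hxy)
    (homologyMap_mulGhost hxy)
  exists_eq_mul_and_mul_eq_zero_of_homotopy hxy h

variable [IsLocalRing R]

lemma noZeroDivisors (hgh : SatisfiesGH R) : NoZeroDivisors R where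
  eq_zero_or_eq_zero_of_mul_eq_zero {x y} hxy := by
    obtain ⟨s, hxs, hsy⟩ := hgh.exists_eq_mul_and_mul_eq_zero hxy
    rcases IsLocalRing.isUnit_or_isUnit_of_add_one (add_sub_cancel s 1) with hs | hs
    · exact Or.inr (hs.mul_right_eq_zero.mp hsy)
    · refine Or.inl (hs.mul_left_eq_zero.mp ?_)
      rw [mul_sub, mul_one, ← hxs, sub_self]

lemma isUnit_of_ne_zero (hgh : SatisfiesGH R) {x : R} (hx : x ≠ 0) : IsUnit x := by
  have := hgh.noZeroDivisors
  obtain ⟨a, b, hab⟩ :=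
    hgh.exists_mul_add_mul_eq_one (IsLeftCancelMulZero.mul_left_cancel_of_ne_zero hx)
  rcases IsLocalRing.isUnit_or_isUnit_of_add_one hab with h | h
  · exact isUnit_of_mul_isUnit_right h
  · exact isUnit_of_mul_isUnit_left h

end SatisfiesGH

theorem vonNeumannRegular_of_localRing_of_gh (R : Type u) [Ring R] [IsLocalRing R]
    (hgh : SatisfiesGH R) :
    ∀ x : R, ∃ y : R, x = x * y * x := by
  intro x
  rcases eq_or_ne x 0 with rfl | hx
  · exact ⟨0, by simp⟩
  · obtain ⟨u, rfl⟩ := hgh.isUnit_of_ne_zero hx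
    exact ⟨↑u⁻¹, by simp⟩
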